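/- arXiv:math/0602266 — 2 statements merged into one kernel-verified Lean document; each statement's English description precedes it below -/
import Mathlib

section
/- There is a constant C > 0, independent of ε, such that for every ε ∈ [0,1) and every z ∈ Δ*: 0 ≤ 1 − M_ε(z) ≤ C · ε² · L_ε(z)² · |z|^{ε} (the right-hand side being read as 0 at ε = 0). Equivalently, for all real a with 0 < a < 1 and all ε with 0 ≤ ε < 1: 0 ≤ 1 − a^{4ε}(1 − log a^{4ε}) ≤ 3 · (a^{−ε} − a^{ε})² · a^{ε} (so C = 3 suffices). -/
/-- Lemma (lem;06.1.2.6): there is a constant `C > 0`, independent of `ε`, such that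
for every `ε ∈ [0,1)` and every `z` in the punctured unit disc,
`0 ≤ 1 - M_ε(z) ≤ C · ε² · L_ε(z)² · |z|^ε`, where `M_ε(z) = |z|^{4ε}(1 - log |z|^{4ε})`
and `ε² · L_ε(z)² = (|z|^{-ε} - |z|^ε)²` (read as `0` at `ε = 0`). -/
theorem one_sub_M_eps_bound :
    ∃ C : ℝ, 0 < C ∧
      ∀ ε : ℝ, 0 ≤ ε → ε < 1 →
        ∀ z : ℂ, 0 < ‖z‖ → ‖z‖ < 1 →
          0 ≤ 1 - ‖z‖ ^ (4 * ε) * (1 - Real.log (‖z‖ ^ (4 * ε))) ∧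
          1 - ‖z‖ ^ (4 * ε) * (1 - Real.log (‖z‖ ^ (4 * ε))) ≤
            C * (‖z‖ ^ (-ε) - ‖z‖ ^ ε) ^ 2 * ‖z‖ ^ ε := by
  refine ⟨3, by norm_num, ?_⟩
  intro ε hε hε1 z hz0 hz1
  set a := ‖z‖ with ha
  set u := a ^ ε with hu
  have hu0 : 0 < u := Real.rpow_pos_of_pos hz0 ε
  have hu1 : u ≤ 1 := Real.rpow_le_one hz0.le hz1.le hε
  have h4 : a ^ (4 * ε) = u ^ 4 := by
    rw [hu, ← Real.rpow_natCast (a ^ ε) 4, ← Real.rpow_mul hz0.le]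
    norm_num; ring_nf
  have hneg : a ^ (-ε) = u⁻¹ := by rw [hu, Real.rpow_neg hz0.le]
  have hlog : Real.log (a ^ (4 * ε)) = 4 * Real.log u := by
    rw [h4, Real.log_pow]; norm_num
  have hl1 : Real.log u ≤ u - 1 := Real.log_le_sub_one_of_pos hu0
  have hl2 : -Real.log u ≤ u⁻¹ - 1 := by
    have := Real.log_le_sub_one_of_pos (inv_pos.mpr hu0)
    rwa [Real.log_inv] at this
  rw [hlog, h4, hneg]
  constructor
  · have hm : u ^ 4 * (-Real.log u) ≤ u ^ 4 * (u⁻¹ - 1) :=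
      mul_le_mul_of_nonneg_left hl2 (by positivity)
    have hinv : u ^ 4 * u⁻¹ = u ^ 3 := by field_simp
    nlinarith [sq_nonneg (1 - u), mul_nonneg (sq_nonneg (1 - u)) (sq_nonneg u),
      mul_nonneg (mul_nonneg (sq_nonneg (1 - u)) hu0.le) hu0.le, hu0.le]
  · have key : (1 - u ^ 4 * (1 - 4 * Real.log u)) * u ≤ 3 * (1 - u ^ 2) ^ 2 := by
      have h5 : (0:ℝ) ≤ u ^ 5 := by positivity
      have hm : 4 * u ^ 5 * Real.log u ≤ 4 * u ^ 5 * (u - 1) := by nlinarith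
      nlinarith [sq_nonneg (1 - u), mul_nonneg (sq_nonneg (1 - u)) hu0.le,
        mul_nonneg (mul_nonneg (sq_nonneg (1 - u)) hu0.le) hu0.le,
        mul_nonneg (mul_nonneg (mul_nonneg (sq_nonneg (1 - u)) hu0.le) hu0.le) hu0.le,
        mul_nonneg (mul_nonneg (mul_nonneg (mul_nonneg (sq_nonneg (1 - u)) hu0.le) hu0.le) hu0.le) hu0.le]
    have hrw : 3 * (u⁻¹ - u) ^ 2 * u = 3 * (1 - u ^ 2) ^ 2 / u := by
      field_simp
    rw [hrw, le_div_iff₀ hu0]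
    exact key
end

section
/- Let n ≥ 1 and let A : ℂ → Mat_{n×n}(ℂ) be holomorphic (analytic) on the open unit disc Δ = {z ∈ ℂ : |z| < 1}. Let f : Δ∖{0} → ℂⁿ be holomorphic and satisfy z · f′(z) = A(z) · f(z) for all z ∈ Δ∖{0} (i.e. f is a single-valued flat section of the logarithmic connection ∇ = d − A(z) dz/z). Then f is meromorphic at 0: there exists a natural number N such that z ↦ z^N · f(z) extends to a holomorphic function on a neighbourhood of 0. -/
open Metric Set Filter Function

private lemma mulVec_norm_le' {n : ℕ} (M : Matrix (Fin n) (Fin n) ℂ) (v : Fin n → ℂ) :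
    ‖M.mulVec v‖ ≤ (∑ i, ∑ j, ‖M i j‖) * ‖v‖ := by
  have hc : 0 ≤ (∑ i, ∑ j, ‖M i j‖) * ‖v‖ := by positivity
  rw [pi_norm_le_iff_of_nonneg hc]
  intro i
  have : M.mulVec v i = ∑ j, M i j * v j := by
    simp [Matrix.mulVec, dotProduct]
  rw [this]
  calc ‖∑ j, M i j * v j‖ ≤ ∑ j, ‖M i j * v j‖ := norm_sum_le _ _
    _ ≤ ∑ j, ‖M i j‖ * ‖v‖ := by
        refine Finset.sum_le_sum fun j _ => ?_
        rw [norm_mul]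
        exact mul_le_mul_of_nonneg_left (norm_le_pi_norm v j) (norm_nonneg _)
    _ = (∑ j, ‖M i j‖) * ‖v‖ := by rw [Finset.sum_mul]
    _ ≤ (∑ i, ∑ j, ‖M i j‖) * ‖v‖ := by
        refine mul_le_mul_of_nonneg_right ?_ (norm_nonneg _)
        exact Finset.single_le_sum (fun k _ => Finset.sum_nonneg fun j _ => norm_nonneg _)
          (Finset.mem_univ i)

/-- Gronwall growth estimate for a flat section along radial rays. -/
private lemma flat_growth {n : ℕ}
    (A : ℂ → Matrix (Fin n) (Fin n) ℂ)
    (f : ℂ → Fin n → ℂ)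
    (hfd : ∀ z ∈ Metric.ball (0 : ℂ) 1 \ {0}, DifferentiableAt ℂ f z)
    (hode : ∀ z ∈ Metric.ball (0 : ℂ) 1 \ {0}, z • deriv f z = (A z).mulVec (f z))
    {K C : ℝ} (hK0 : 0 ≤ K)
    (hK : ∀ z ∈ Metric.closedBall (0 : ℂ) (1/2), (∑ i, ∑ j, ‖A z i j‖) ≤ K)
    (hC : ∀ z ∈ Metric.sphere (0 : ℂ) (1/2), ‖f z‖ ≤ C)
    {z : ℂ} (hz0 : z ≠ 0) (hzr : ‖z‖ ≤ 1/2) :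
    ‖f z‖ ≤ C * Real.exp (K * Real.log ((1/2) / ‖z‖)) := by
  have hzpos : (0 : ℝ) < ‖z‖ := norm_pos_iff.2 hz0
  set w : ℂ := (↑‖z‖)⁻¹ * z with hw_def
  have hznez : ((‖z‖ : ℝ) : ℂ) ≠ 0 := by
    exact_mod_cast ne_of_gt hzpos
  have hw : ‖w‖ = 1 := by
    rw [hw_def, norm_mul, norm_inv, Complex.norm_real, Real.norm_eq_abs,
      abs_of_pos hzpos, inv_mul_cancel₀ (ne_of_gt hzpos)]
  set S : ℝ := Real.log ((1/2) / ‖z‖) with hS_def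
  have hS0 : 0 ≤ S := Real.log_nonneg (by
    rw [le_div_iff₀ hzpos]; linarith)
  set γ : ℝ → ℂ := fun s => ((1/2 : ℂ) * w) * Complex.exp (-(s : ℂ)) with hγ_def
  have hγnorm : ∀ s : ℝ, ‖γ s‖ = (1/2) * Real.exp (-s) := by
    intro s
    have hhalf : ‖(1/2 : ℂ)‖ = 1/2 := by norm_num
    have hexp : ‖Complex.exp (-(s : ℂ))‖ = Real.exp (-s) := by
      rw [Complex.norm_exp]
      simp
    rw [hγ_def]
    show ‖(1/2 : ℂ) * w * Complex.exp (-(s : ℂ))‖ = _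
    rw [norm_mul, norm_mul, hw, mul_one, hhalf, hexp]
  have hγderiv : ∀ s : ℝ, HasDerivAt γ (-γ s) s := by
    intro s
    have h1 : HasDerivAt (fun zc : ℂ => Complex.exp (-zc))
        (Complex.exp (-(s : ℂ)) * (-1)) (s : ℂ) := by
      have := (Complex.hasDerivAt_exp (-(s : ℂ))).comp (s : ℂ)
        ((hasDerivAt_id (s : ℂ)).neg)
      simpa [Function.comp_def] using this
    have h2 : HasDerivAt (fun x : ℝ => Complex.exp (-(x : ℂ)))
        (Complex.exp (-(s : ℂ)) * (-1)) s := h1.comp_ofReal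
    have h3 := h2.const_mul ((1/2 : ℂ) * w)
    have : ((1/2 : ℂ) * w) * (Complex.exp (-(s : ℂ)) * (-1)) = -γ s := by
      rw [hγ_def]; ring
    rw [this] at h3
    exact h3
  have hγmem : ∀ s : ℝ, 0 ≤ s → γ s ∈ Metric.ball (0 : ℂ) 1 \ {0} := by
    intro s hs
    have hns : ‖γ s‖ = (1/2) * Real.exp (-s) := hγnorm s
    have hexp1 : Real.exp (-s) ≤ 1 := Real.exp_le_one_iff.2 (by linarith)
    have hexp0 : 0 < Real.exp (-s) := Real.exp_pos _
    constructor
    · rw [Metric.mem_ball, dist_zero_right, hns]; nlinarith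
    · simp only [Set.mem_singleton_iff]
      intro h
      rw [h, norm_zero] at hns
      nlinarith
  have hγcb : ∀ s : ℝ, 0 ≤ s → γ s ∈ Metric.closedBall (0 : ℂ) (1/2) := by
    intro s hs
    rw [Metric.mem_closedBall, dist_zero_right, hγnorm s]
    have hexp1 : Real.exp (-s) ≤ 1 := Real.exp_le_one_iff.2 (by linarith)
    nlinarith [Real.exp_pos (-s)]
  set u : ℝ → (Fin n → ℂ) := f ∘ γ with hu_def
  set u' : ℝ → (Fin n → ℂ) := fun s => -((A (γ s)).mulVec (f (γ s))) with hu'_def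
  have hu : ∀ s : ℝ, 0 ≤ s → HasDerivAt u (u' s) s := by
    intro s hs
    have hmem := hγmem s hs
    have hd : DifferentiableAt ℂ f (γ s) := hfd _ hmem
    have hcomp : HasDerivAt (f ∘ γ) ((-γ s) • deriv f (γ s)) s :=
      HasDerivAt.scomp s hd.hasDerivAt (hγderiv s)
    have heq : (-γ s) • deriv f (γ s) = u' s := by
      rw [neg_smul, hode (γ s) hmem, hu'_def]
    rw [hu_def, ← heq]
    exact hcomp
  have hucont : ContinuousOn u (Set.Icc 0 S) := fun s hs =>
    ((hu s hs.1).continuousAt).continuousWithinAt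
  have hu0 : ‖u 0‖ ≤ C := by
    have hγ0 : γ 0 ∈ Metric.sphere (0 : ℂ) (1/2) := by
      rw [mem_sphere_zero_iff_norm, hγnorm 0]
      simp
    exact hC _ hγ0
  have hbound : ∀ s ∈ Set.Ico (0 : ℝ) S, ‖u' s‖ ≤ K * ‖u s‖ + 0 := by
    intro s hs
    rw [hu'_def]
    simp only [norm_neg, add_zero]
    calc ‖(A (γ s)).mulVec (f (γ s))‖
        ≤ (∑ i, ∑ j, ‖A (γ s) i j‖) * ‖f (γ s)‖ := mulVec_norm_le' _ _
      _ ≤ K * ‖u s‖ :=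
          mul_le_mul_of_nonneg_right (hK _ (hγcb s hs.1)) (norm_nonneg _)
  have hgron := norm_le_gronwallBound_of_norm_deriv_right_le hucont
    (fun s hs => (hu s hs.1).hasDerivWithinAt) hu0 hbound
  have hfin := hgron S (Set.right_mem_Icc.2 hS0)
  rw [sub_zero, gronwallBound_ε0] at hfin
  have hγS : γ S = z := by
    have hexpS : Real.exp (-S) = ‖z‖ * 2 := by
      rw [hS_def, Real.exp_neg, Real.exp_log (by positivity)]
      field_simp
    have h1 : Complex.exp (-(S : ℂ)) = ((‖z‖ * 2 : ℝ) : ℂ) := by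
      rw [show -(S : ℂ) = ((-S : ℝ) : ℂ) by push_cast; ring, ← Complex.ofReal_exp, hexpS]
    rw [hγ_def]
    show (1/2 : ℂ) * w * Complex.exp (-(S : ℂ)) = z
    rw [h1, hw_def, Complex.ofReal_mul, Complex.ofReal_ofNat]
    rw [show (1/2 : ℂ) * ((↑‖z‖)⁻¹ * z) * (↑‖z‖ * 2) = ((↑‖z‖)⁻¹ * ↑‖z‖) * z from by ring,
      inv_mul_cancel₀ hznez, one_mul]
  have huS : u S = f z := by
    rw [hu_def, Function.comp_apply, hγS]
  rw [huS] at hfin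
  exact hfin

/-- Regular singularity lemma: a single-valued flat section `f` on the punctured unit disc
of a logarithmic connection `∇ = d - A(z) dz/z` (with `A` holomorphic on the disc) is
meromorphic at `0`: some power `z^N · f(z)` extends holomorphically across `0`. -/
theorem flat_section_meromorphic_at_zero (n : ℕ) (hn : 1 ≤ n)
    (A : ℂ → Matrix (Fin n) (Fin n) ℂ)
    (hA : ∀ i j, DifferentiableOn ℂ (fun z => A z i j) (Metric.ball (0 : ℂ) 1))
    (f : ℂ → Fin n → ℂ)
    (hf : DifferentiableOn ℂ f (Metric.ball (0 : ℂ) 1 \ {0}))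
    (hode : ∀ z ∈ Metric.ball (0 : ℂ) 1 \ {0}, z • deriv f z = (A z).mulVec (f z)) :
    ∃ (N : ℕ) (g : ℂ → Fin n → ℂ), AnalyticAt ℂ g 0 ∧
      ∀ᶠ z in nhdsWithin (0 : ℂ) {(0 : ℂ)}ᶜ, z ^ N • f z = g z := by
  have hopen : IsOpen (Metric.ball (0 : ℂ) 1 \ {0}) :=
    Metric.isOpen_ball.sdiff isClosed_singleton
  have hfd : ∀ z ∈ Metric.ball (0 : ℂ) 1 \ {0}, DifferentiableAt ℂ f z :=
    fun z hz => hf.differentiableAt (hopen.mem_nhds hz)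
  -- bound on A over the closed ball of radius 1/2
  have hsub : Metric.closedBall (0 : ℂ) (1/2) ⊆ Metric.ball (0 : ℂ) 1 := by
    apply Metric.closedBall_subset_ball; norm_num
  have hBcont : ContinuousOn (fun z => ∑ i, ∑ j, ‖A z i j‖)
      (Metric.closedBall (0 : ℂ) (1/2)) := by
    apply continuousOn_finset_sum
    intro i _
    apply continuousOn_finset_sum
    intro j _
    exact (((hA i j).continuousOn).mono hsub).norm
  obtain ⟨K₀, hK₀⟩ := (isCompact_closedBall (0 : ℂ) (1/2)).exists_bound_of_continuousOn hBcont
  set K : ℝ := max K₀ 0 with hKdef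
  have hK0 : 0 ≤ K := le_max_right _ _
  have hK : ∀ z ∈ Metric.closedBall (0 : ℂ) (1/2), (∑ i, ∑ j, ‖A z i j‖) ≤ K := by
    intro z hz
    have := hK₀ z hz
    rw [Real.norm_eq_abs] at this
    exact le_trans (le_abs_self _) (le_trans this (le_max_left _ _))
  -- bound on f over the sphere of radius 1/2
  have hsph : Metric.sphere (0 : ℂ) (1/2) ⊆ Metric.ball (0 : ℂ) 1 \ {0} := by
    intro z hz
    rw [mem_sphere_zero_iff_norm] at hz
    constructor
    · rw [Metric.mem_ball, dist_zero_right, hz]; norm_num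
    · simp only [Set.mem_singleton_iff]
      intro h; rw [h, norm_zero] at hz; norm_num at hz
  obtain ⟨C, hCb⟩ := (isCompact_sphere (0 : ℂ) (1/2)).exists_bound_of_continuousOn
    (hf.continuousOn.mono hsph)
  have hC : ∀ z ∈ Metric.sphere (0 : ℂ) (1/2), ‖f z‖ ≤ C := hCb
  have hC0 : 0 ≤ C := by
    have : ((1/2 : ℝ) : ℂ) ∈ Metric.sphere (0 : ℂ) (1/2) := by
      rw [mem_sphere_zero_iff_norm, Complex.norm_real, Real.norm_eq_abs]
      norm_num
    exact le_trans (norm_nonneg _) (hC _ this)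
  -- the growth estimate
  have hgrowth := fun (z : ℂ) (hz0 : z ≠ 0) (hzr : ‖z‖ ≤ 1/2) =>
    flat_growth A f hfd hode hK0 hK hC hz0 hzr
  -- choose N
  set N : ℕ := ⌈K⌉₊ + 1 with hNdef
  have hNK : K + 1 ≤ (N : ℝ) := by
    rw [hNdef]
    push_cast
    have := Nat.le_ceil K
    linarith
  set D : ℝ := C * (1/2 : ℝ) ^ K with hDdef
  -- eventual bound
  have hev : ∀ᶠ z in nhdsWithin (0 : ℂ) {(0 : ℂ)}ᶜ, ‖z ^ N • f z‖ ≤ D * ‖z‖ := by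
    have hball : Metric.ball (0 : ℂ) (1/2) ∈ nhdsWithin (0 : ℂ) {(0 : ℂ)}ᶜ :=
      nhdsWithin_le_nhds (Metric.ball_mem_nhds 0 (by norm_num))
    filter_upwards [hball, self_mem_nhdsWithin] with z hz1 hz2
    have hz0 : z ≠ 0 := hz2
    have hzpos : (0 : ℝ) < ‖z‖ := norm_pos_iff.2 hz0
    rw [Metric.mem_ball, dist_zero_right] at hz1
    have hzr : ‖z‖ ≤ 1/2 := le_of_lt hz1
    have hfb := hgrowth z hz0 hzr
    have hns : ‖z ^ N • f z‖ = ‖z‖ ^ N * ‖f z‖ := by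
      rw [norm_smul, norm_pow]
    rw [hns]
    have hexp : Real.exp (K * Real.log ((1/2) / ‖z‖)) = ((1/2) / ‖z‖) ^ K := by
      rw [Real.rpow_def_of_pos (by positivity), mul_comm]
    have hdiv : ((1/2 : ℝ) / ‖z‖) ^ K = (1/2 : ℝ) ^ K / ‖z‖ ^ K :=
      Real.div_rpow (by norm_num : (0:ℝ) ≤ 1/2) (le_of_lt hzpos) K
    have hpow : ‖z‖ ^ N = ‖z‖ ^ (N : ℝ) := (Real.rpow_natCast _ _).symm
    have hcomb : ‖z‖ ^ (N : ℝ) / ‖z‖ ^ K = ‖z‖ ^ ((N : ℝ) - K) :=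
      (Real.rpow_sub hzpos _ _).symm
    have hle1 : ‖z‖ ^ ((N : ℝ) - K) ≤ ‖z‖ ^ (1 : ℝ) :=
      Real.rpow_le_rpow_of_exponent_ge hzpos (by linarith) (by linarith)
    rw [Real.rpow_one] at hle1
    calc ‖z‖ ^ N * ‖f z‖
        ≤ ‖z‖ ^ N * (C * Real.exp (K * Real.log ((1/2) / ‖z‖))) := by
          apply mul_le_mul_of_nonneg_left hfb (by positivity)
      _ = C * ((1/2 : ℝ) ^ K * (‖z‖ ^ (N : ℝ) / ‖z‖ ^ K)) := by
          rw [hexp, hdiv, hpow]; ring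
      _ = C * ((1/2 : ℝ) ^ K * ‖z‖ ^ ((N : ℝ) - K)) := by rw [hcomb]
      _ ≤ C * ((1/2 : ℝ) ^ K * ‖z‖) := by
          apply mul_le_mul_of_nonneg_left _ hC0
          apply mul_le_mul_of_nonneg_left hle1 (by positivity)
      _ = D * ‖z‖ := by rw [hDdef]; ring
  -- tendsto 0
  have htend : Tendsto (fun z : ℂ => z ^ N • f z) (nhdsWithin (0 : ℂ) {(0 : ℂ)}ᶜ) (nhds 0) := by
    apply squeeze_zero_norm' hev
    have : Tendsto (fun z : ℂ => D * ‖z‖) (nhds (0 : ℂ)) (nhds (D * ‖(0 : ℂ)‖)) :=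
      (continuous_const.mul continuous_norm).tendsto 0
    simp only [norm_zero, mul_zero] at this
    exact this.mono_left nhdsWithin_le_nhds
  -- removable singularity
  set F : ℂ → Fin n → ℂ := Function.update (fun z : ℂ => z ^ N • f z) 0 0 with hFdef
  have hFc : ContinuousAt F 0 := continuousAt_update_same.2 htend
  have hFd : ∀ᶠ z in nhdsWithin (0 : ℂ) {(0 : ℂ)}ᶜ, DifferentiableAt ℂ F z := by
    have hball : Metric.ball (0 : ℂ) 1 ∈ nhdsWithin (0 : ℂ) {(0 : ℂ)}ᶜ :=
      nhdsWithin_le_nhds (Metric.ball_mem_nhds 0 (by norm_num))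
    filter_upwards [hball, self_mem_nhdsWithin] with z hz1 hz2
    have hz0 : z ≠ 0 := hz2
    have h1 : DifferentiableAt ℂ (fun z : ℂ => z ^ N • f z) z :=
      (differentiableAt_pow N).smul (hfd z ⟨hz1, hz0⟩)
    apply h1.congr_of_eventuallyEq
    filter_upwards [eventually_ne_nhds hz0] with z' hz' using
      Function.update_of_ne hz' _ _
  refine ⟨N, F, Complex.analyticAt_of_differentiable_on_punctured_nhds_of_continuousAt hFd hFc, ?_⟩
  filter_upwards [self_mem_nhdsWithin] with z hz
  have hz0 : z ≠ 0 := hz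
  exact (Function.update_of_ne hz0 (0 : Fin n → ℂ) (fun z : ℂ => z ^ N • f z)).symm
end
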